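/- arXiv:math/0603205 — 4 statements merged into one kernel-verified Lean document; each statement's English description precedes it below -/
import Mathlib

section
/- For the eight 8×8 real matrices T₁,…,T₈ defined as block matrices of 2×2 blocks (T₁ = diag(diag(1,−1), −I₂, −I₂, −I₂), T₂ = diag([[0,1],[1,0]],[[0,−1],[1,0]],[[0,−1],[1,0]],[[0,1],[−1,0]]), and T₃,…,T₈ the explicit block anti-diagonal matrices given in the paper), one has Tᵢ·Tⱼᵀ + Tⱼ·Tᵢᵀ = 2δᵢⱼ·I₈ for all i,j ∈ {1,…,8}. -/
open Matrix

noncomputable def Tmat : Fin 8 → Matrix (Fin 8) (Fin 8) ℝ :=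
  ![ !![1,0,0,0,0,0,0,0; 0,-1,0,0,0,0,0,0; 0,0,-1,0,0,0,0,0; 0,0,0,-1,0,0,0,0;
       0,0,0,0,-1,0,0,0; 0,0,0,0,0,-1,0,0; 0,0,0,0,0,0,-1,0; 0,0,0,0,0,0,0,-1],
     !![0,1,0,0,0,0,0,0; 1,0,0,0,0,0,0,0; 0,0,0,-1,0,0,0,0; 0,0,1,0,0,0,0,0;
       0,0,0,0,0,-1,0,0; 0,0,0,0,1,0,0,0; 0,0,0,0,0,0,0,1; 0,0,0,0,0,0,-1,0],
     !![0,0,1,0,0,0,0,0; 0,0,0,1,0,0,0,0; 1,0,0,0,0,0,0,0; 0,-1,0,0,0,0,0,0;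
       0,0,0,0,0,0,-1,0; 0,0,0,0,0,0,0,-1; 0,0,0,0,1,0,0,0; 0,0,0,0,0,1,0,0],
     !![0,0,0,1,0,0,0,0; 0,0,-1,0,0,0,0,0; 0,1,0,0,0,0,0,0; 1,0,0,0,0,0,0,0;
       0,0,0,0,0,0,0,-1; 0,0,0,0,0,0,1,0; 0,0,0,0,0,-1,0,0; 0,0,0,0,1,0,0,0],
     !![0,0,0,0,1,0,0,0; 0,0,0,0,0,1,0,0; 0,0,0,0,0,0,1,0; 0,0,0,0,0,0,0,1;
       1,0,0,0,0,0,0,0; 0,-1,0,0,0,0,0,0; 0,0,-1,0,0,0,0,0; 0,0,0,-1,0,0,0,0],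
     !![0,0,0,0,0,1,0,0; 0,0,0,0,-1,0,0,0; 0,0,0,0,0,0,0,1; 0,0,0,0,0,0,-1,0;
       0,1,0,0,0,0,0,0; 1,0,0,0,0,0,0,0; 0,0,0,1,0,0,0,0; 0,0,-1,0,0,0,0,0],
     !![0,0,0,0,0,0,1,0; 0,0,0,0,0,0,0,-1; 0,0,0,0,-1,0,0,0; 0,0,0,0,0,1,0,0;
       0,0,1,0,0,0,0,0; 0,0,0,-1,0,0,0,0; 1,0,0,0,0,0,0,0; 0,1,0,0,0,0,0,0],
     !![0,0,0,0,0,0,0,1; 0,0,0,0,0,0,1,0; 0,0,0,0,0,-1,0,0; 0,0,0,0,-1,0,0,0;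
       0,0,0,1,0,0,0,0; 0,0,1,0,0,0,0,0; 0,-1,0,0,0,0,0,0; 1,0,0,0,0,0,0,0] ]


private def Zmat : Fin 8 → Matrix (Fin 8) (Fin 8) ℤ :=
  ![ !![1,0,0,0,0,0,0,0; 0,-1,0,0,0,0,0,0; 0,0,-1,0,0,0,0,0; 0,0,0,-1,0,0,0,0;
       0,0,0,0,-1,0,0,0; 0,0,0,0,0,-1,0,0; 0,0,0,0,0,0,-1,0; 0,0,0,0,0,0,0,-1],
     !![0,1,0,0,0,0,0,0; 1,0,0,0,0,0,0,0; 0,0,0,-1,0,0,0,0; 0,0,1,0,0,0,0,0;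
       0,0,0,0,0,-1,0,0; 0,0,0,0,1,0,0,0; 0,0,0,0,0,0,0,1; 0,0,0,0,0,0,-1,0],
     !![0,0,1,0,0,0,0,0; 0,0,0,1,0,0,0,0; 1,0,0,0,0,0,0,0; 0,-1,0,0,0,0,0,0;
       0,0,0,0,0,0,-1,0; 0,0,0,0,0,0,0,-1; 0,0,0,0,1,0,0,0; 0,0,0,0,0,1,0,0],
     !![0,0,0,1,0,0,0,0; 0,0,-1,0,0,0,0,0; 0,1,0,0,0,0,0,0; 1,0,0,0,0,0,0,0;
       0,0,0,0,0,0,0,-1; 0,0,0,0,0,0,1,0; 0,0,0,0,0,-1,0,0; 0,0,0,0,1,0,0,0],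
     !![0,0,0,0,1,0,0,0; 0,0,0,0,0,1,0,0; 0,0,0,0,0,0,1,0; 0,0,0,0,0,0,0,1;
       1,0,0,0,0,0,0,0; 0,-1,0,0,0,0,0,0; 0,0,-1,0,0,0,0,0; 0,0,0,-1,0,0,0,0],
     !![0,0,0,0,0,1,0,0; 0,0,0,0,-1,0,0,0; 0,0,0,0,0,0,0,1; 0,0,0,0,0,0,-1,0;
       0,1,0,0,0,0,0,0; 1,0,0,0,0,0,0,0; 0,0,0,1,0,0,0,0; 0,0,-1,0,0,0,0,0],
     !![0,0,0,0,0,0,1,0; 0,0,0,0,0,0,0,-1; 0,0,0,0,-1,0,0,0; 0,0,0,0,0,1,0,0;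
       0,0,1,0,0,0,0,0; 0,0,0,-1,0,0,0,0; 1,0,0,0,0,0,0,0; 0,1,0,0,0,0,0,0],
     !![0,0,0,0,0,0,0,1; 0,0,0,0,0,0,1,0; 0,0,0,0,0,-1,0,0; 0,0,0,0,-1,0,0,0;
       0,0,0,1,0,0,0,0; 0,0,1,0,0,0,0,0; 0,-1,0,0,0,0,0,0; 1,0,0,0,0,0,0,0] ]


private lemma Zmat_anti : ∀ i j : Fin 8,
    Zmat i * (Zmat j)ᵀ + Zmat j * (Zmat i)ᵀ =
      if i = j then (2 : ℤ) • (1 : Matrix (Fin 8) (Fin 8) ℤ) else 0 := by decide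

private lemma comp_cons {α β : Type*} {n : ℕ} (g : α → β) (a : α) (v : Fin n → α) :
    g ∘ Matrix.vecCons a v = Matrix.vecCons (g a) (g ∘ v) := by
  funext i
  refine Fin.cases ?_ ?_ i <;> simp

private lemma comp_empty {α β : Type*} (g : α → β) :
    g ∘ (Matrix.vecEmpty : Fin 0 → α) = Matrix.vecEmpty := by
  funext i
  exact i.elim0

private lemma map_of {m n : ℕ} (f : ℤ → ℝ) (v : Fin m → Fin n → ℤ) :
    (Matrix.of v).map f = Matrix.of ((f ∘ ·) ∘ v) := rfl

private lemma Tmat_eq_map : ∀ k : Fin 8, Tmat k = (Zmat k).map (Int.cast : ℤ → ℝ) := by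
  have h : Tmat = (Matrix.map · (Int.cast : ℤ → ℝ)) ∘ Zmat := by
    simp only [Tmat, Zmat, comp_cons, comp_empty, map_of, Int.cast_zero, Int.cast_one,
      Int.cast_neg]
  intro k
  rw [h]
  rfl

theorem Tmat_anticommutation :
    ∀ i j : Fin 8,
      Tmat i * (Tmat j)ᵀ + Tmat j * (Tmat i)ᵀ =
        if i = j then (2 : ℝ) • (1 : Matrix (Fin 8) (Fin 8) ℝ) else 0 := by
  intro i j
  have hmul : ∀ A B : Matrix (Fin 8) (Fin 8) ℤ,
      (A * B).map (Int.cast : ℤ → ℝ) = A.map Int.cast * B.map Int.cast := fun A B =>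
    Matrix.map_mul (f := Int.castRingHom ℝ)
  have hadd : ∀ A B : Matrix (Fin 8) (Fin 8) ℤ,
      (A + B).map (Int.cast : ℤ → ℝ) = A.map Int.cast + B.map Int.cast := fun A B =>
    Matrix.map_add _ (fun a b => by push_cast; ring) A B
  have h2 := congrArg (fun M => M.map (Int.cast : ℤ → ℝ)) (Zmat_anti i j)
  simp only [hadd, hmul, Matrix.transpose_map] at h2
  rw [Tmat_eq_map i, Tmat_eq_map j, h2]
  by_cases hij : i = j
  · rw [hij, if_pos rfl, if_pos rfl]
    ext a b
    rw [Matrix.map_apply, Matrix.smul_apply, Matrix.smul_apply, Matrix.one_apply,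
      Matrix.one_apply]
    split <;> simp
  · simp [hij, Matrix.map_zero]
end

section
/- Let α be a nonzero row vector in ℂⁿ, let b ∈ ℂ, let a = α·ᾱᵀ (so a = ‖α‖²), and for 1 ≤ j ≤ n let X_j be the sum of all j×j principal minors of the matrix I − (b/j)·αᵀ·ᾱ. Then X_j = C(n−1, j−1)·(1 − ab/j) + C(n−1, j) = C(n,j)·(n − ab)/n. In particular, X_j = 0 if and only if ab = n. -/
open Complex

/-- The sum of all `j × j` principal minors of a square matrix `M`. -/
noncomputable def principalMinorSum {n : ℕ} (j : ℕ)
    (M : Matrix (Fin n) (Fin n) ℂ) : ℂ :=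
  ∑ s ∈ Finset.univ.powersetCard j,
    (M.submatrix (fun i : (s : Finset (Fin n)) => (i : Fin n))
      (fun i : (s : Finset (Fin n)) => (i : Fin n))).det

/-! By the matrix determinant lemma, the principal minor of `1 - c • αᵀᾱ` on an index set `s`
is `1 - c ∑_{i ∈ s} |α i|²`. Summing over the `C(n, j)` sets of size `j`, each index lies in
`C(n-1, j-1)` of them, so the minor sum is `C(n, j) - c C(n-1, j-1) a`; with `c = b / j` and
`j C(n, j) = n C(n-1, j-1)` this is `C(n, j) (n - a b) / n`. -/

namespace Finset

variable {α : Type*} [DecidableEq α]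

theorem card_filter_mem_powersetCard_succ {t : Finset α} {i : α} (hi : i ∈ t) (k : ℕ) :
    #{s ∈ t.powersetCard (k + 1) | i ∈ s} = (#t - 1).choose k := by
  rw [← card_erase_of_mem hi, ← card_powersetCard]
  refine card_bij' (fun s _ => s.erase i) (fun s _ => insert i s) ?_ ?_ ?_ ?_
  · intro s hs
    rw [mem_filter, mem_powersetCard] at hs
    rw [mem_powersetCard, card_erase_of_mem hs.2, hs.1.2]
    exact ⟨erase_subset_erase i hs.1.1, rfl⟩
  · intro s hs
    rw [mem_powersetCard, subset_erase] at hs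
    rw [mem_filter, mem_powersetCard, card_insert_of_notMem hs.1.2, hs.2]
    exact ⟨⟨insert_subset hi hs.1.1, rfl⟩, mem_insert_self i s⟩
  · intro s hs
    exact insert_erase (mem_filter.1 hs).2
  · intro s hs
    exact erase_insert (subset_erase.1 (mem_powersetCard.1 hs).1).2

theorem sum_powersetCard_succ_sum {M : Type*} [AddCommMonoid M] (t : Finset α) (k : ℕ)
    (f : α → M) :
    ∑ s ∈ t.powersetCard (k + 1), ∑ i ∈ s, f i = (#t - 1).choose k • ∑ i ∈ t, f i := by
  rw [sum_comm' (t' := t) (s' := fun i => {s ∈ t.powersetCard (k + 1) | i ∈ s})]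
  · rw [smul_sum]
    refine sum_congr rfl fun i hi => ?_
    rw [sum_const, card_filter_mem_powersetCard_succ hi]
  · intro s i
    simp only [mem_filter, mem_powersetCard]
    exact ⟨fun h => ⟨⟨h.1, h.2⟩, h.1.1 h.2⟩, fun h => ⟨h.1.1, h.1.2⟩⟩

end Finset

namespace Matrix

variable {ι R : Type*} [DecidableEq ι] [CommRing R]

theorem det_one_sub_smul_vecMulVec [Fintype ι] (c : R) (u v : ι → R) :
    (1 - c • vecMulVec u v).det = 1 - c * (u ⬝ᵥ v) := by
  rw [sub_eq_add_neg, ← neg_smul, ← smul_vecMulVec, vecMulVec_eq Unit,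
    det_one_add_replicateCol_mul_replicateRow, dotProduct_comm, smul_dotProduct, smul_eq_mul,
    neg_mul, ← sub_eq_add_neg]

theorem det_principal_submatrix_one_sub_smul_vecMulVec (c : R) (u v : ι → R) (s : Finset ι) :
    ((1 - c • vecMulVec u v).submatrix (fun i : s => (i : ι)) (fun i : s => (i : ι))).det
      = 1 - c * ∑ i ∈ s, u i * v i := by
  have hsub : (1 - c • vecMulVec u v).submatrix (fun i : s => (i : ι)) (fun i : s => (i : ι))
      = 1 - c • vecMulVec (fun i : s => u i) (fun i : s => v i) := by
    rw [submatrix_sub, Pi.sub_apply, Pi.sub_apply, submatrix_one _ Subtype.val_injective,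
      submatrix_smul, Pi.smul_apply, Pi.smul_apply]
    rfl
  rw [hsub, det_one_sub_smul_vecMulVec, dotProduct, Finset.sum_coe_sort s fun i => u i * v i]

end Matrix

open Finset Matrix in
theorem principalMinorSum_one_sub_smul_vecMulVec (n k : ℕ) (c : ℂ) (u v : Fin n → ℂ) :
    principalMinorSum (k + 1) (1 - c • vecMulVec u v)
      = n.choose (k + 1) - c * ((n - 1).choose k * ∑ i, u i * v i) := by
  rw [principalMinorSum]
  simp_rw [det_principal_submatrix_one_sub_smul_vecMulVec]
  rw [sum_sub_distrib, ← mul_sum, sum_powersetCard_succ_sum, sum_const, card_powersetCard]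
  simp only [card_univ, Fintype.card_fin, nsmul_eq_mul, mul_one]

theorem principal_minor_sum_rank_one_perturbation_general
    (n : ℕ) (j : ℕ) (hj1 : 1 ≤ j) (hjn : j ≤ n)
    (α : Fin n → ℂ) (b : ℂ)
    (a : ℂ) (ha : a = ∑ k, α k * (starRingEnd ℂ) (α k))
    (X : ℂ)
    (hX : X = principalMinorSum j
      ((1 : Matrix (Fin n) (Fin n) ℂ) -
        (b / (j : ℂ)) • Matrix.of (fun k l => α k * (starRingEnd ℂ) (α l)))) :
    X = (Nat.choose (n - 1) (j - 1) : ℂ) * (1 - a * b / (j : ℂ))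
          + (Nat.choose (n - 1) j : ℂ)
      ∧ X = (Nat.choose n j : ℂ) * ((n : ℂ) - a * b) / (n : ℂ)
      ∧ (X = 0 ↔ a * b = (n : ℂ)) := by
  obtain ⟨k, rfl⟩ : ∃ k, j = k + 1 := ⟨j - 1, by omega⟩
  obtain ⟨m, rfl⟩ : ∃ m, n = m + 1 := ⟨n - 1, by omega⟩
  have hsum : X = (m + 1).choose (k + 1) - b / (k + 1 : ℕ) * (m.choose k * a) := by
    rw [hX, ha]
    exact principalMinorSum_one_sub_smul_vecMulVec (m + 1) k _ α (star α)
  have hpascal : ((m + 1).choose (k + 1) : ℂ) = m.choose k + m.choose (k + 1) := by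
    exact_mod_cast Nat.choose_succ_succ' m k
  have habsorb : ((m + 1 : ℕ) : ℂ) * m.choose k = (m + 1).choose (k + 1) * (k + 1 : ℕ) := by
    exact_mod_cast Nat.add_one_mul_choose_eq m k
  have hclosed : X = (m + 1).choose (k + 1) * ((m + 1 : ℕ) - a * b) / (m + 1 : ℕ) := by
    rw [hsum]
    field_simp
    linear_combination (-(a * b)) * habsorb
  refine ⟨?_, hclosed, ?_⟩
  · rw [hsum, hpascal]
    simp only [Nat.add_sub_cancel]
    push_cast
    ring
  · have hchoose : ((m + 1).choose (k + 1) : ℂ) ≠ 0 := Nat.cast_ne_zero.2 (Nat.choose_pos hjn).ne'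
    have hn : ((m + 1 : ℕ) : ℂ) ≠ 0 := Nat.cast_ne_zero.2 m.succ_ne_zero
    rw [hclosed, div_eq_zero_iff, mul_eq_zero, sub_eq_zero]
    simp only [hchoose, hn, false_or, or_false]
    exact ⟨Eq.symm, Eq.symm⟩

theorem principal_minor_sum_rank_one_perturbation
    (n : ℕ) (j : ℕ) (hj1 : 1 ≤ j) (hjn : j ≤ n)
    (α : Fin n → ℂ) (hα : α ≠ 0) (b : ℂ)
    (a : ℂ) (ha : a = ∑ k, α k * (starRingEnd ℂ) (α k))
    (X : ℂ)
    (hX : X = principalMinorSum j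
      ((1 : Matrix (Fin n) (Fin n) ℂ) -
        (b / (j : ℂ)) • Matrix.of (fun k l => α k * (starRingEnd ℂ) (α l)))) :
    X = (Nat.choose (n - 1) (j - 1) : ℂ) * (1 - a * b / (j : ℂ))
          + (Nat.choose (n - 1) j : ℂ)
      ∧ X = (Nat.choose n j : ℂ) * ((n : ℂ) - a * b) / (n : ℂ)
      ∧ (X = 0 ↔ a * b = (n : ℂ)) :=
  principal_minor_sum_rank_one_perturbation_general n j hj1 hjn α b a ha X hX
end

section
/- Let n, m be positive integers, U an m×n complex matrix with U·Ū ᵀ = I_m, and let u ∈ ℂ^{mn} be the vector obtained by concatenating the rows of U. Set j ∈ {1,…,mn} and let L = −(n/j)·I_{mn} + (n/j)²·ūᵀ·u. Then the sum of all j×j principal minors of L equals [C(mn,j)·(1 − (n/j)·u·ūᵀ) + C(mn,j)·(n(mn−j)/(j·mn))·m]·(−n/j)^j, which equals 0 (using u·ūᵀ = m). -/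
open Complex Matrix

theorem Nat.mul_choose_eq_mul_choose_pred {N j : ℕ} (hj : 1 ≤ j) :
    j * N.choose j = N * (N - 1).choose (j - 1) := by
  obtain ⟨i, rfl⟩ := Nat.exists_eq_add_of_le' hj
  cases N with
  | zero => simp
  | succ M => simpa [mul_comm] using (Nat.add_one_mul_choose_eq M i).symm

theorem Finset.sum_powersetCard_sum {α M : Type*} [DecidableEq α] [AddCommMonoid M]
    (t : Finset α) {j : ℕ} (hj : 1 ≤ j) (f : α → M) :
    ∑ s ∈ t.powersetCard j, ∑ k ∈ s, f k = (t.card - 1).choose (j - 1) • ∑ k ∈ t, f k := by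
  rw [Finset.sum_comm' (t' := t) (s' := fun k => (t.powersetCard j).filter ({k} ⊆ ·))]
  · rw [Finset.smul_sum]
    refine Finset.sum_congr rfl fun k hk => ?_
    rw [Finset.sum_const, Finset.card_filter_powersetCard_subset _ _ _
      (Finset.singleton_subset_iff.2 hk) (by simpa using hj), Finset.card_singleton]
  · intro s k
    simp only [Finset.mem_filter, Finset.mem_powersetCard, Finset.singleton_subset_iff]
    exact ⟨fun ⟨⟨hst, hs⟩, hks⟩ => ⟨⟨⟨hst, hs⟩, hks⟩, hst hks⟩, fun ⟨h, _⟩ => ⟨h.1, h.2⟩⟩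

theorem Matrix.det_smul_one_add_vecMulVec {ι K : Type*} [Fintype ι] [DecidableEq ι] [Field K]
    {a : K} (ha : a ≠ 0) (v w : ι → K) :
    det (a • 1 + vecMulVec v w) = a ^ Fintype.card ι * (1 + a⁻¹ * (w ⬝ᵥ v)) := by
  have h : a • 1 + vecMulVec v w = a • (1 + vecMulVec (a⁻¹ • v) w) := by
    rw [smul_add, smul_vecMulVec, smul_smul, mul_inv_cancel₀ ha, one_smul]
  rw [h, det_smul, vecMulVec_eq Unit, det_one_add_replicateCol_mul_replicateRow, dotProduct_smul,
    smul_eq_mul]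

theorem Matrix.submatrix_smul_one_add_vecMulVec {ι κ R : Type*} [DecidableEq ι] [DecidableEq κ]
    [CommSemiring R] (a : R) (v w : ι → R) {e : κ → ι} (he : Function.Injective e) :
    (a • 1 + vecMulVec v w).submatrix e e = a • 1 + vecMulVec (v ∘ e) (w ∘ e) := by
  ext i k
  simp [vecMulVec_apply, one_apply, he.eq_iff]

theorem principalMinorSum_smul_one_add_vecMulVec {N j : ℕ} (hj : 1 ≤ j) {a : ℂ} (ha : a ≠ 0)
    (v w : Fin N → ℂ) :
    principalMinorSum j (a • 1 + vecMulVec v w) =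
      a ^ j * (N.choose j + a⁻¹ * ((N - 1).choose (j - 1) * (w ⬝ᵥ v))) := by
  have hminor : ∀ s ∈ Finset.univ.powersetCard j,
      ((a • 1 + vecMulVec v w).submatrix (fun i : (s : Finset (Fin N)) => (i : Fin N))
        (fun i : (s : Finset (Fin N)) => (i : Fin N))).det =
      a ^ j + a ^ j * a⁻¹ * ∑ k ∈ s, w k * v k := by
    intro s hs
    rw [submatrix_smul_one_add_vecMulVec a v w Subtype.val_injective,
      det_smul_one_add_vecMulVec ha, Fintype.card_coe, (Finset.mem_powersetCard.1 hs).2]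
    simp only [dotProduct, Function.comp_apply]
    rw [Finset.sum_coe_sort s fun k => w k * v k]
    ring
  rw [principalMinorSum, Finset.sum_congr rfl hminor, Finset.sum_add_distrib, ← Finset.mul_sum,
    Finset.sum_powersetCard_sum _ hj, Finset.sum_const, Finset.card_powersetCard, Finset.card_univ,
    Fintype.card_fin, nsmul_eq_mul, nsmul_eq_mul, dotProduct]
  ring

theorem Matrix.sum_mul_star_eq_card_of_mul_conjTranspose_eq_one {m n R : Type*} [Fintype m]
    [Fintype n] [DecidableEq m] [Semiring R] [Star R] {U : Matrix m n R} (hU : U * Uᴴ = 1) :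
    ∑ i, ∑ l, U i l * star (U i l) = Fintype.card m := by
  have hrow : ∀ i, ∑ l, U i l * star (U i l) = 1 := fun i => by
    simpa [mul_apply] using congrFun (congrFun hU i) i
  simp [hrow]

theorem principal_minor_sum_vanishes_for_L_general
    (m n : ℕ) (hm : 0 < m) (hn : 0 < n)
    (U : Matrix (Fin m) (Fin n) ℂ) (hU : U * Uᴴ = 1)
    (u : Fin (m * n) → ℂ)
    (hu : u = fun k => U (finProdFinEquiv.symm k).1 (finProdFinEquiv.symm k).2)
    (j : ℕ) (hj1 : 1 ≤ j)
    (L : Matrix (Fin (m * n)) (Fin (m * n)) ℂ)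
    (hL : L = (-((n : ℂ) / (j : ℂ))) • (1 : Matrix (Fin (m * n)) (Fin (m * n)) ℂ)
        + ((n : ℂ) / (j : ℂ)) ^ 2 •
            Matrix.of (fun k l => (starRingEnd ℂ) (u k) * u l)) :
    principalMinorSum j L =
        ((Nat.choose (m * n) j : ℂ) *
            (1 - ((n : ℂ) / (j : ℂ)) * ∑ k, u k * (starRingEnd ℂ) (u k))
          + (Nat.choose (m * n) j : ℂ) *
            ((n : ℂ) * ((m : ℂ) * (n : ℂ) - (j : ℂ)) / ((j : ℂ) * ((m : ℂ) * (n : ℂ)))) * (m : ℂ))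
          * (-((n : ℂ) / (j : ℂ))) ^ j
      ∧ principalMinorSum j L = 0 := by
  have hm0 : (m : ℂ) ≠ 0 := by exact_mod_cast hm.ne'
  have hn0 : (n : ℂ) ≠ 0 := by exact_mod_cast hn.ne'
  have hj0 : (j : ℂ) ≠ 0 := by exact_mod_cast (by omega : j ≠ 0)
  have hnorm : ∑ k, u k * (starRingEnd ℂ) (u k) = m := by
    subst hu
    rw [Equiv.sum_comp finProdFinEquiv.symm fun p => U p.1 p.2 * (starRingEnd ℂ) (U p.1 p.2),
      Fintype.sum_prod_type]
    simpa using sum_mul_star_eq_card_of_mul_conjTranspose_eq_one hU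
  have hchoose : (j : ℂ) * (m * n).choose j = m * n * (m * n - 1).choose (j - 1) := by
    exact_mod_cast Nat.mul_choose_eq_mul_choose_pred (N := m * n) hj1
  have hL' : L = (-((n : ℂ) / j)) • 1 + vecMulVec (((n : ℂ) / j) ^ 2 • star u) u := by
    rw [hL, smul_vecMulVec]
    rfl
  have hminor : principalMinorSum j L = 0 := by
    rw [hL', principalMinorSum_smul_one_add_vecMulVec hj1 (by simp [hn0, hj0]), dotProduct_smul,
      smul_eq_mul, show u ⬝ᵥ star u = m from hnorm]
    refine mul_eq_zero_of_right _ ?_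
    field_simp
    linear_combination hchoose
  have hbracket : ((m * n).choose j : ℂ) * (1 - (n : ℂ) / j * m)
      + ((m * n).choose j : ℂ) * (n * (m * n - j) / (j * (m * n))) * m = 0 := by
    field_simp
    ring
  rw [hnorm, hbracket, zero_mul]
  exact ⟨hminor, hminor⟩

theorem principal_minor_sum_vanishes_for_L
    (m n : ℕ) (hm : 0 < m) (hn : 0 < n)
    (U : Matrix (Fin m) (Fin n) ℂ) (hU : U * Uᴴ = 1)
    (u : Fin (m * n) → ℂ)
    (hu : u = fun k => U (finProdFinEquiv.symm k).1 (finProdFinEquiv.symm k).2)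
    (j : ℕ) (hj1 : 1 ≤ j) (hj : j ≤ m * n)
    (L : Matrix (Fin (m * n)) (Fin (m * n)) ℂ)
    (hL : L = (-((n : ℂ) / (j : ℂ))) • (1 : Matrix (Fin (m * n)) (Fin (m * n)) ℂ)
        + ((n : ℂ) / (j : ℂ)) ^ 2 •
            Matrix.of (fun k l => (starRingEnd ℂ) (u k) * u l)) :
    principalMinorSum j L =
        ((Nat.choose (m * n) j : ℂ) *
            (1 - ((n : ℂ) / (j : ℂ)) * ∑ k, u k * (starRingEnd ℂ) (u k))
          + (Nat.choose (m * n) j : ℂ) *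
            ((n : ℂ) * ((m : ℂ) * (n : ℂ) - (j : ℂ)) / ((j : ℂ) * ((m : ℂ) * (n : ℂ)))) * (m : ℂ))
          * (-((n : ℂ) / (j : ℂ))) ^ j
      ∧ principalMinorSum j L = 0 :=
  principal_minor_sum_vanishes_for_L_general m n hm hn U hU u hu j hj1 L hL
end

section
/- Let Z, U be m×n complex matrices with I − Z·Z̄ᵀ positive definite and U·Ūᵀ = I, and let A, B, C, D define a holomorphic automorphism W = (AZ+B)(CZ+D)⁻¹ of ℜ_I(m,n) mapping Z₀ = −A⁻¹B to 0, with I − Z₀Z̄₀ᵀ = (ĀᵀA)⁻¹, I − Z̄₀ᵀZ₀ = (D̄ᵀD)⁻¹, and C̄ᵀD̄ᵀ⁻¹ = A⁻¹B. Then for P(Z,U) = det(I−ZZ̄ᵀ)ⁿ/|det(I−ZŪᵀ)|²ⁿ and V the image of U, one has P(W,V) = P(Z,U)/P(Z₀,U). -/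
/-!
The automorphism comes from a block matrix `M = [[A, B], [C, D]]` with `Mᴴ J M = J`,
`J = diag(1, -1)`; the normalisation at `Z₀` forces `B = -A Z₀`, `C = -D Z₀ᴴ`, and then
`Mᴴ J M = J` reduces to the push-through identity `(1 - X Y)⁻¹ = 1 + X (1 - Y X)⁻¹ Y`.
Since `(Aᴴ + Z Bᴴ) W = Cᴴ + Z Dᴴ`, the same identity gives
`(A + B Zᴴ)ᴴ (1 - W Vᴴ) (A + B Uᴴ) = 1 - Z Uᴴ`. Taking determinants, the factor `det (A + B Zᴴ)`
cancels from `P(Z, U)`, leaving `P(Z, U) = P(W, V) / |det (A + B Uᴴ)|^{2n}`; for `Z₀ ↦ 0` this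
reads `P(Z₀, U) = |det (A + B Uᴴ)|^{-2n}`, and dividing gives the claim. The divisor is nonzero
because `det (A + B Uᴴ) = det A · det (1 - Z₀ Uᴴ)`, `1 - Z₀ᴴ Z₀ > 0` and `Uᴴ` is an isometry.
-/

open Matrix Complex ComplexOrder

/-- The Poisson kernel `P(Z,U) = det(I − ZZ̄ᵀ)ⁿ / |det(I − ZŪᵀ)|²ⁿ` of the
Cartan domain `ℜ_I(m,n)`. -/
noncomputable def PoissonI (m n : ℕ) (Z U : Matrix (Fin m) (Fin n) ℂ) : ℂ :=
  ((1 - Z * Zᴴ).det) ^ n / (((‖(1 - Z * Uᴴ).det‖ : ℝ) : ℂ)) ^ (2 * n)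

namespace Matrix

variable {ι κ R : Type*} [Fintype ι] [Fintype κ] [DecidableEq ι] [DecidableEq κ] [CommRing R]

theorem inv_one_sub_mul {X : Matrix ι κ R} {Y : Matrix κ ι R} (h : IsUnit (1 - Y * X).det) :
    (1 - X * Y)⁻¹ = 1 + X * (1 - Y * X)⁻¹ * Y := by
  refine inv_eq_left_inv ?_
  calc (1 + X * (1 - Y * X)⁻¹ * Y) * (1 - X * Y)
      = 1 - X * Y + X * ((1 - Y * X)⁻¹ * (1 - Y * X)) * Y := by
        simp only [Matrix.add_mul, Matrix.mul_sub, Matrix.sub_mul, Matrix.mul_assoc,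
          Matrix.one_mul, Matrix.mul_one]
        abel
    _ = 1 := by rw [nonsing_inv_mul _ h, Matrix.mul_one, sub_add_cancel]

theorem inv_one_sub_mul_mul {X : Matrix ι κ R} {Y : Matrix κ ι R} (h : IsUnit (1 - Y * X).det) :
    (1 - X * Y)⁻¹ * X = X * (1 - Y * X)⁻¹ := by
  calc (1 - X * Y)⁻¹ * X = X * ((1 - Y * X)⁻¹ * (1 - Y * X + Y * X)) := by
        rw [inv_one_sub_mul h]
        simp only [Matrix.add_mul, Matrix.mul_add, Matrix.mul_assoc, Matrix.one_mul,
          Matrix.mul_one, nonsing_inv_mul _ h]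
    _ = X * (1 - Y * X)⁻¹ := by rw [sub_add_cancel, Matrix.mul_one]

theorem det_one_sub_mul_conjTranspose_ne_zero {K : Type*} [Field K] [PartialOrder K]
    [StarRing K] {X U : Matrix ι κ K} (hX : (1 - Xᴴ * X).PosDef) (hU : U * Uᴴ = 1) :
    (1 - X * Uᴴ).det ≠ 0 := by
  intro hdet
  obtain ⟨v, hv, hXv⟩ := exists_mulVec_eq_zero_iff.mpr hdet
  rw [sub_mulVec, one_mulVec, sub_eq_zero, ← mulVec_mulVec] at hXv
  have hw : Uᴴ *ᵥ v ≠ 0 := fun h ↦ hv (by rw [hXv, h, mulVec_zero])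
  have hUw : star (Uᴴ *ᵥ v) ⬝ᵥ (Uᴴ *ᵥ v) = star v ⬝ᵥ v := by
    rw [star_mulVec, conjTranspose_conjTranspose, ← dotProduct_mulVec, mulVec_mulVec, hU,
      one_mulVec]
  have hXUw : star (Uᴴ *ᵥ v) ⬝ᵥ ((Xᴴ * X) *ᵥ (Uᴴ *ᵥ v)) = star v ⬝ᵥ v := by
    rw [← mulVec_mulVec, ← hXv, dotProduct_mulVec, ← star_mulVec, ← hXv]
  have hpos := hX.dotProduct_mulVec_pos hw
  rw [sub_mulVec, one_mulVec, dotProduct_sub, hUw, hXUw, sub_self] at hpos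
  exact hpos.false

variable [StarRing R]

/-- `M = [[A, B], [C, D]]` satisfies `Mᴴ J M = J` with `J = diag(1, -1)`, i.e. `M ∈ U(p, q)`. -/
structure IsPseudoUnitary (A : Matrix ι ι R) (B : Matrix ι κ R) (C : Matrix κ ι R)
    (D : Matrix κ κ R) : Prop where
  toBlocks₁₁ : Aᴴ * A - Cᴴ * C = 1
  toBlocks₁₂ : Aᴴ * B = Cᴴ * D
  toBlocks₂₂ : Dᴴ * D - Bᴴ * B = 1

theorem isPseudoUnitary_of_one_sub_eq_inv {A : Matrix ι ι R} {D : Matrix κ κ R}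
    {Z₀ : Matrix ι κ R} (hA : IsUnit A) (hD : IsUnit D)
    (hAZ₀ : 1 - Z₀ * Z₀ᴴ = (Aᴴ * A)⁻¹) (hDZ₀ : 1 - Z₀ᴴ * Z₀ = (Dᴴ * D)⁻¹) :
    IsPseudoUnitary A (-(A * Z₀)) (-(D * Z₀ᴴ)) D := by
  have hAA : IsUnit (Aᴴ * A).det := (isUnit_iff_isUnit_det _).mp (hA.star.mul hA)
  have hDD : IsUnit (Dᴴ * D).det := (isUnit_iff_isUnit_det _).mp (hD.star.mul hD)
  have hP : (1 - Z₀ * Z₀ᴴ)⁻¹ = Aᴴ * A := by rw [hAZ₀, nonsing_inv_nonsing_inv _ hAA]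
  have hQ : (1 - Z₀ᴴ * Z₀)⁻¹ = Dᴴ * D := by rw [hDZ₀, nonsing_inv_nonsing_inv _ hDD]
  have hP_unit : IsUnit (1 - Z₀ * Z₀ᴴ).det := by rw [hAZ₀]; exact isUnit_nonsing_inv_det _ hAA
  have hQ_unit : IsUnit (1 - Z₀ᴴ * Z₀).det := by rw [hDZ₀]; exact isUnit_nonsing_inv_det _ hDD
  refine ⟨?_, ?_, ?_⟩
  · rw [← hP, inv_one_sub_mul hQ_unit, hQ]
    simp [Matrix.mul_assoc]
  · rw [Matrix.mul_neg, ← Matrix.mul_assoc, ← hP, inv_one_sub_mul_mul hQ_unit]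
    simp [Matrix.mul_assoc, hQ]
  · rw [← hQ, inv_one_sub_mul hP_unit, hP]
    simp [Matrix.mul_assoc]

namespace IsPseudoUnitary

variable {A : Matrix ι ι R} {B : Matrix ι κ R} {C : Matrix κ ι R} {D : Matrix κ κ R}

theorem toBlocks₂₁ (h : IsPseudoUnitary A B C D) : Bᴴ * A = Dᴴ * C := by
  simpa only [conjTranspose_mul, conjTranspose_conjTranspose] using
    congrArg conjTranspose h.toBlocks₁₂

/-- `(X Mᴴ) J (M Y) = X J Y` for `X = [X₁, X₂]` and `Y = [Y₁; Y₂]`. -/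
theorem preserves_form (h : IsPseudoUnitary A B C D) {l₁ l₂ : Type*}
    (X₁ : Matrix l₁ ι R) (X₂ : Matrix l₁ κ R) (Y₁ : Matrix ι l₂ R) (Y₂ : Matrix κ l₂ R) :
    (X₁ * Aᴴ + X₂ * Bᴴ) * (A * Y₁ + B * Y₂) - (X₁ * Cᴴ + X₂ * Dᴴ) * (C * Y₁ + D * Y₂)
      = X₁ * Y₁ - X₂ * Y₂ := by
  calc _ = X₁ * (Aᴴ * A - Cᴴ * C) * Y₁ + X₁ * (Aᴴ * B - Cᴴ * D) * Y₂
        + X₂ * (Bᴴ * A - Dᴴ * C) * Y₁ - X₂ * (Dᴴ * D - Bᴴ * B) * Y₂ := by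
        simp only [Matrix.mul_add, Matrix.add_mul, Matrix.mul_sub, Matrix.sub_mul,
          Matrix.mul_assoc]
        abel
    _ = X₁ * Y₁ - X₂ * Y₂ := by
        rw [h.toBlocks₁₁, h.toBlocks₂₂, h.toBlocks₁₂, h.toBlocks₂₁]
        simp

theorem mul_mul_inv_eq (h : IsPseudoUnitary A B C D) {Z : Matrix ι κ R}
    (hZ : IsUnit (C * Z + D)) :
    (Aᴴ + Z * Bᴴ) * ((A * Z + B) * (C * Z + D)⁻¹) = Cᴴ + Z * Dᴴ := by
  have hform : (Aᴴ + Z * Bᴴ) * (A * Z + B) = (Cᴴ + Z * Dᴴ) * (C * Z + D) := by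
    simpa [sub_eq_zero] using h.preserves_form 1 Z Z 1
  rw [← Matrix.mul_assoc, hform, Matrix.mul_assoc,
    mul_nonsing_inv _ ((isUnit_iff_isUnit_det _).mp hZ), Matrix.mul_one]

theorem conjTranspose_mul_one_sub_mul (h : IsPseudoUnitary A B C D) {Z U W V : Matrix ι κ R}
    (hW : (Aᴴ + Z * Bᴴ) * W = Cᴴ + Z * Dᴴ) (hV : (Aᴴ + U * Bᴴ) * V = Cᴴ + U * Dᴴ) :
    (A + B * Zᴴ)ᴴ * (1 - W * Vᴴ) * (A + B * Uᴴ) = 1 - Z * Uᴴ := by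
  have hV' : Vᴴ * (A + B * Uᴴ) = C + D * Uᴴ := by
    simpa only [conjTranspose_mul, conjTranspose_add, conjTranspose_conjTranspose] using
      congrArg conjTranspose hV
  calc (A + B * Zᴴ)ᴴ * (1 - W * Vᴴ) * (A + B * Uᴴ)
      = (Aᴴ + Z * Bᴴ) * (A + B * Uᴴ) - ((Aᴴ + Z * Bᴴ) * W) * (Vᴴ * (A + B * Uᴴ)) := by
        simp only [conjTranspose_add, conjTranspose_mul, conjTranspose_conjTranspose,
          Matrix.mul_sub, Matrix.sub_mul, Matrix.mul_one, Matrix.mul_assoc]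
    _ = 1 - Z * Uᴴ := by
        rw [hW, hV']
        simpa using h.preserves_form 1 Z 1 Uᴴ

theorem star_det_mul_det_mul_det (h : IsPseudoUnitary A B C D) {Z U W V : Matrix ι κ R}
    (hW : (Aᴴ + Z * Bᴴ) * W = Cᴴ + Z * Dᴴ) (hV : (Aᴴ + U * Bᴴ) * V = Cᴴ + U * Dᴴ) :
    star (A + B * Zᴴ).det * (1 - W * Vᴴ).det * (A + B * Uᴴ).det = (1 - Z * Uᴴ).det := by
  rw [← det_conjTranspose, ← det_mul, ← det_mul, h.conjTranspose_mul_one_sub_mul hW hV]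

end IsPseudoUnitary

end Matrix

theorem poissonI_zero_left {m n : ℕ} (V : Matrix (Fin m) (Fin n) ℂ) : PoissonI m n 0 V = 1 := by
  simp [PoissonI]

namespace Matrix.IsPseudoUnitary

variable {m n : ℕ} {A : Matrix (Fin m) (Fin m) ℂ} {B : Matrix (Fin m) (Fin n) ℂ}
  {C : Matrix (Fin n) (Fin m) ℂ} {D : Matrix (Fin n) (Fin n) ℂ}

theorem poissonI_eq_div (h : IsPseudoUnitary A B C D) {Z U W V : Matrix (Fin m) (Fin n) ℂ}
    (hZ : (1 - Z * Zᴴ).det ≠ 0)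
    (hW : (Aᴴ + Z * Bᴴ) * W = Cᴴ + Z * Dᴴ) (hV : (Aᴴ + U * Bᴴ) * V = Cᴴ + U * Dᴴ) :
    PoissonI m n Z U = PoissonI m n W V / (‖(A + B * Uᴴ).det‖ : ℂ) ^ (2 * n) := by
  have hZZ := h.star_det_mul_det_mul_det hW hW
  have hZU := h.star_det_mul_det_mul_det hW hV
  set k := (A + B * Zᴴ).det
  have hk : (‖k‖ : ℂ) ≠ 0 := by
    rintro hk
    rw [ofReal_eq_zero, norm_eq_zero] at hk
    exact hZ (by rw [← hZZ, hk, mul_zero])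
  rw [PoissonI, PoissonI, ← hZZ, ← hZU, mul_right_comm, RCLike.star_def, conj_mul', norm_mul,
    norm_mul, Complex.norm_conj]
  push_cast
  rw [mul_pow, mul_pow, mul_pow, ← pow_mul, div_div, mul_assoc (_ ^ _),
    mul_div_mul_left _ _ (pow_ne_zero _ hk)]

theorem poissonI_eq_div_poissonI (h : IsPseudoUnitary A B C D)
    {Z U W V Z₀ : Matrix (Fin m) (Fin n) ℂ} (hZ : (1 - Z * Zᴴ).det ≠ 0)
    (hZ₀ : (1 - Z₀ * Z₀ᴴ).det ≠ 0) (hZ₀_zero : Cᴴ + Z₀ * Dᴴ = 0)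
    (hU : (A + B * Uᴴ).det ≠ 0)
    (hW : (Aᴴ + Z * Bᴴ) * W = Cᴴ + Z * Dᴴ) (hV : (Aᴴ + U * Bᴴ) * V = Cᴴ + U * Dᴴ) :
    PoissonI m n W V = PoissonI m n Z U / PoissonI m n Z₀ U := by
  rw [h.poissonI_eq_div hZ hW hV,
    h.poissonI_eq_div (W := 0) hZ₀ (by rw [Matrix.mul_zero, hZ₀_zero]) hV, poissonI_zero_left,
    div_div_div_cancel_right₀ (by exact_mod_cast pow_ne_zero _ (norm_ne_zero_iff.mpr hU)),
    div_one]

end Matrix.IsPseudoUnitary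

theorem poisson_kernel_transformation_RI_general
    (m n : ℕ) (Z U : Matrix (Fin m) (Fin n) ℂ)
    (hZ : (1 - Z * Zᴴ).PosDef) (hU : U * Uᴴ = 1)
    (A : Matrix (Fin m) (Fin m) ℂ) (B : Matrix (Fin m) (Fin n) ℂ)
    (C : Matrix (Fin n) (Fin m) ℂ) (D : Matrix (Fin n) (Fin n) ℂ)
    (hA : IsUnit A) (hD : IsUnit D)
    (hCZD : IsUnit (C * Z + D)) (hCUD : IsUnit (C * U + D))
    (Z₀ : Matrix (Fin m) (Fin n) ℂ) (hZ₀ : Z₀ = -(A⁻¹ * B))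
    (h1 : 1 - Z₀ * Z₀ᴴ = (Aᴴ * A)⁻¹)
    (h2 : 1 - Z₀ᴴ * Z₀ = (Dᴴ * D)⁻¹)
    (h3 : Cᴴ * (Dᴴ)⁻¹ = A⁻¹ * B)
    (W V : Matrix (Fin m) (Fin n) ℂ)
    (hW : W = (A * Z + B) * (C * Z + D)⁻¹)
    (hV : V = (A * U + B) * (C * U + D)⁻¹) :
    PoissonI m n W V = PoissonI m n Z U / PoissonI m n Z₀ U := by
  have hdetA := (isUnit_iff_isUnit_det A).mp hA
  have hCH : Cᴴ = -(Z₀ * Dᴴ) := by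
    rw [hZ₀, ← h3, Matrix.neg_mul, neg_neg, Matrix.mul_assoc, nonsing_inv_mul Dᴴ
      ((isUnit_iff_isUnit_det _).mp hD.star), Matrix.mul_one]
  obtain rfl : B = -(A * Z₀) := by
    rw [hZ₀, Matrix.mul_neg, ← Matrix.mul_assoc, mul_nonsing_inv _ hdetA, Matrix.one_mul, neg_neg]
  obtain rfl : C = -(D * Z₀ᴴ) := by simpa using congrArg conjTranspose hCH
  have hM := isPseudoUnitary_of_one_sub_eq_inv hA hD h1 h2
  have hZ₀_unit : IsUnit (1 - Z₀ * Z₀ᴴ).det := by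
    rw [h1]; exact isUnit_nonsing_inv_det _ ((isUnit_iff_isUnit_det _).mp (hA.star.mul hA))
  have hZ₀_posDef : (1 - Z₀ᴴ * Z₀).PosDef := by
    rw [h2]; exact (PosDef.conjTranspose_mul_self D (mulVec_injective_iff_isUnit.mpr hD)).inv
  have hAU : A + -(A * Z₀) * Uᴴ = A * (1 - Z₀ * Uᴴ) := by
    rw [Matrix.mul_sub, Matrix.mul_one, Matrix.neg_mul, Matrix.mul_assoc, sub_eq_add_neg]
  subst hW hV
  refine hM.poissonI_eq_div_poissonI hZ.det_pos.ne' hZ₀_unit.ne_zero (by simp) ?_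
    (hM.mul_mul_inv_eq hCZD) (hM.mul_mul_inv_eq hCUD)
  rw [hAU, det_mul]
  exact mul_ne_zero hdetA.ne_zero (det_one_sub_mul_conjTranspose_ne_zero hZ₀_posDef hU)

theorem poisson_kernel_transformation_RI
    (m n : ℕ) (Z U : Matrix (Fin m) (Fin n) ℂ)
    (hZ : (1 - Z * Zᴴ).PosDef) (hU : U * Uᴴ = 1)
    (A : Matrix (Fin m) (Fin m) ℂ) (B : Matrix (Fin m) (Fin n) ℂ)
    (C : Matrix (Fin n) (Fin m) ℂ) (D : Matrix (Fin n) (Fin n) ℂ)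
    (hA : IsUnit A) (hD : IsUnit D)
    (hCZD : IsUnit (C * Z + D)) (hCUD : IsUnit (C * U + D))
    (hauto : ∀ Z' : Matrix (Fin m) (Fin n) ℂ,
      (A * Z' + B) * (C * Z' + D)⁻¹ = (Aᴴ + Z' * Bᴴ)⁻¹ * (Cᴴ + Z' * Dᴴ))
    (Z₀ : Matrix (Fin m) (Fin n) ℂ) (hZ₀ : Z₀ = -(A⁻¹ * B))
    (h1 : 1 - Z₀ * Z₀ᴴ = (Aᴴ * A)⁻¹)
    (h2 : 1 - Z₀ᴴ * Z₀ = (Dᴴ * D)⁻¹)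
    (h3 : Cᴴ * (Dᴴ)⁻¹ = A⁻¹ * B)
    (W V : Matrix (Fin m) (Fin n) ℂ)
    (hW : W = (A * Z + B) * (C * Z + D)⁻¹)
    (hV : V = (A * U + B) * (C * U + D)⁻¹) :
    PoissonI m n W V = PoissonI m n Z U / PoissonI m n Z₀ U :=
  poisson_kernel_transformation_RI_general m n Z U hZ hU A B C D hA hD hCZD hCUD Z₀ hZ₀ h1 h2 h3 W V
    hW hV
end
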